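/- Let P₀,…,P_k be rank-1 projectors built from a holomorphic nonvanishing f via fⱼ = P₊^j f (all assumed nonvanishing, j ≤ k), with Pⱼ = (fⱼ⊗fⱼ†)/(fⱼ†fⱼ). Assume ∂(∑_{j=0}^{k−2} Pⱼ) = (f_{k−1} ⊗ f_{k−2}†)/(|f_{k−2}|²). Then ∂(∑_{j=0}^{k−1} Pⱼ) = (f_k ⊗ f_{k−1}†)/(|f_{k−1}|²). -/

import Mathlib

open Matrix Complex BigOperators

/-- Wirtinger derivative ∂ of a scalar function. -/
noncomputable def wd (g : ℂ → ℂ) (z : ℂ) : ℂ :=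
  (fderiv ℝ g z 1 - Complex.I * fderiv ℝ g z Complex.I) / 2

/-- Wirtinger derivative ∂̄ of a scalar function. -/
noncomputable def wdbar (g : ℂ → ℂ) (z : ℂ) : ℂ :=
  (fderiv ℝ g z 1 + Complex.I * fderiv ℝ g z Complex.I) / 2

/-- Componentwise ∂ of a vector-valued function. -/
noncomputable def wdv {N : ℕ} (f : ℂ → Fin N → ℂ) (z : ℂ) : Fin N → ℂ :=
  fun i => wd (fun w => f w i) z

/-- Componentwise ∂̄ of a vector-valued function. -/
noncomputable def wdbarv {N : ℕ} (f : ℂ → Fin N → ℂ) (z : ℂ) : Fin N → ℂ :=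
  fun i => wdbar (fun w => f w i) z

/-- Entrywise ∂ of a matrix-valued function. -/
noncomputable def wdm {N : ℕ} (P : ℂ → Matrix (Fin N) (Fin N) ℂ) (z : ℂ) :
    Matrix (Fin N) (Fin N) ℂ :=
  Matrix.of fun i j => wd (fun w => P w i j) z

/-- Entrywise ∂̄ of a matrix-valued function. -/
noncomputable def wdbarm {N : ℕ} (P : ℂ → Matrix (Fin N) (Fin N) ℂ) (z : ℂ) :
    Matrix (Fin N) (Fin N) ℂ :=
  Matrix.of fun i j => wdbar (fun w => P w i j) z

/-- The rank-1 projector P = (f ⊗ f†)/(f† f). -/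
noncomputable def proj {N : ℕ} (f : Fin N → ℂ) : Matrix (Fin N) (Fin N) ℂ :=
  (star f ⬝ᵥ f)⁻¹ • Matrix.vecMulVec f (star f)

/-- P₊(f, g) = g − f (f† g)/(f† f). -/
noncomputable def Pplus {N : ℕ} (f g : Fin N → ℂ) : Fin N → ℂ :=
  g - ((star f ⬝ᵥ g) / (star f ⬝ᵥ f)) • f

/-- fⱼ = P₊ʲ f, built from a map f : ℂ → ℂᴺ using the Wirtinger ∂. -/
noncomputable def Fseq {N : ℕ} (f : ℂ → Fin N → ℂ) : ℕ → ℂ → Fin N → ℂ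
  | 0 => f
  | (j + 1) => fun z => Pplus (Fseq f j z) (wdv (Fseq f j) z)

open scoped ContDiff ComplexOrder

/-!
Write `fⱼ = Fseq f j`, `nⱼ = fⱼ†fⱼ` and `cⱼ = FseqCoeff f j = fⱼ†∂fⱼ / nⱼ`, so that
`∂fⱼ = f_{j+1} + cⱼ fⱼ`.
The heart of the matter is `∂̄f_{j+1} = -(n_{j+1}/nⱼ) fⱼ`, by induction on `j`: applying `∂̄` to
`f_{j+1} = ∂fⱼ - cⱼ fⱼ` and commuting `∂̄` past `∂`, the formula for `∂̄fⱼ` puts `∂̄f_{j+1}` in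
the span of `fⱼ` and `f_{j-1}`. Its two coordinates are read off by pairing with `fⱼ` and
`f_{j-1}`, using `fᵢ†∂̄fₗ = -(∂fᵢ)†fₗ` for orthogonal `fᵢ, fₗ`; so the derivatives of `cⱼ` and of
`n_{j+1}/nⱼ` never have to be computed. The product rule then gives
`∂P_{j+1} = f_{j+2}f_{j+1}†/n_{j+1} - f_{j+1}fⱼ†/nⱼ`, and the sums of the `Pⱼ` telescope.
-/

section Scalar

variable {g h : ℂ → ℂ} {z : ℂ}

theorem wd_add (hg : DifferentiableAt ℝ g z) (hh : DifferentiableAt ℝ h z) :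
    wd (fun w => g w + h w) z = wd g z + wd h z := by
  simp only [wd, fderiv_fun_add hg hh, _root_.add_apply]; ring

theorem wd_mul (hg : DifferentiableAt ℝ g z) (hh : DifferentiableAt ℝ h z) :
    wd (fun w => g w * h w) z = wd g z * h z + g z * wd h z := by
  simp only [wd, fderiv_fun_mul hg hh, _root_.add_apply,
    _root_.smul_apply, smul_eq_mul]; ring

theorem wdbar_sub (hg : DifferentiableAt ℝ g z) (hh : DifferentiableAt ℝ h z) :
    wdbar (fun w => g w - h w) z = wdbar g z - wdbar h z := by
  simp only [wdbar, fderiv_fun_sub hg hh, _root_.sub_apply]; ring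

theorem wdbar_mul (hg : DifferentiableAt ℝ g z) (hh : DifferentiableAt ℝ h z) :
    wdbar (fun w => g w * h w) z = wdbar g z * h z + g z * wdbar h z := by
  simp only [wdbar, fderiv_fun_mul hg hh, _root_.add_apply,
    _root_.smul_apply, smul_eq_mul]; ring

theorem wd_sum {ι : Type*} {s : Finset ι} {F : ι → ℂ → ℂ}
    (hF : ∀ i ∈ s, DifferentiableAt ℝ (F i) z) :
    wd (fun w => ∑ i ∈ s, F i w) z = ∑ i ∈ s, wd (F i) z := by
  simp only [wd, fderiv_fun_sum hF, _root_.sum_apply, Finset.mul_sum,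
    ← Finset.sum_sub_distrib, Finset.sum_div]

theorem wdbar_sum {ι : Type*} {s : Finset ι} {F : ι → ℂ → ℂ}
    (hF : ∀ i ∈ s, DifferentiableAt ℝ (F i) z) :
    wdbar (fun w => ∑ i ∈ s, F i w) z = ∑ i ∈ s, wdbar (F i) z := by
  simp only [wdbar, fderiv_fun_sum hF, _root_.sum_apply, Finset.mul_sum,
    ← Finset.sum_add_distrib, Finset.sum_div]

theorem wd_inv (hg : DifferentiableAt ℝ g z) (hz : g z ≠ 0) :
    wd (fun w => (g w)⁻¹) z = -wd g z / g z ^ 2 := by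
  have h : fderiv ℝ (fun w => (g w)⁻¹) z = fderiv ℝ Inv.inv (g z) ∘L fderiv ℝ g z :=
    fderiv_comp z (differentiableAt_inv hz) hg
  simp only [wd, h, fderiv_inv' hz, ContinuousLinearMap.comp_apply,
    _root_.neg_apply, ContinuousLinearMap.mulLeftRight_apply]
  field_simp
  ring

theorem wd_star : wd (fun w => star (g w)) z = star (wdbar g z) := by
  simp only [wd, wdbar, fderiv_star, ContinuousLinearMap.comp_apply, ContinuousLinearEquiv.coe_coe,
    starL'_apply, star_div₀, star_add, star_mul', star_ofNat]
  simp only [Complex.star_def, conj_I]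
  ring

theorem wdbar_star : wdbar (fun w => star (g w)) z = star (wd g z) := by
  simp only [wd, wdbar, fderiv_star, ContinuousLinearMap.comp_apply, ContinuousLinearEquiv.coe_coe,
    starL'_apply, star_div₀, star_sub, star_mul', star_ofNat]
  simp only [Complex.star_def, conj_I]
  ring

theorem wdbar_eq_zero_of_differentiableAt (hg : DifferentiableAt ℂ g z) : wdbar g z = 0 := by
  have h : fderiv ℝ g z = (fderiv ℂ g z).restrictScalars ℝ :=
    (hg.hasFDerivAt.restrictScalars ℝ).fderiv
  have hI : fderiv ℂ g z I = I * fderiv ℂ g z 1 := by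
    rw [← smul_eq_mul, ← map_smul, smul_eq_mul, mul_one]
  simp only [wdbar, h, ContinuousLinearMap.coe_restrictScalars', hI]
  linear_combination (fderiv ℂ g z 1 / 2) * I_mul_I

theorem wdbar_wd_comm (hg : ContDiffAt ℝ 2 g z) :
    wdbar (wd g) z = wd (wdbar g) z := by
  set D := fderiv ℝ (fderiv ℝ g) z
  have hD : HasFDerivAt (fderiv ℝ g) D z :=
    ((hg.fderiv_right (m := 1) le_rfl).differentiableAt one_ne_zero).hasFDerivAt
  have hv : ∀ v, HasFDerivAt (fun w => fderiv ℝ g w v) (D.flip v) z := fun v => by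
    simpa using hD.clm_apply (hasFDerivAt_const v z)
  have hwd : HasFDerivAt (wd g) ((2 : ℂ)⁻¹ • (D.flip 1 - I • D.flip I)) z :=
    (((hv 1).fun_sub ((hv I).const_mul I)).const_mul (2 : ℂ)⁻¹).congr_of_eventuallyEq
      (.of_forall fun w => by simp only [wd]; ring)
  have hwdbar : HasFDerivAt (wdbar g) ((2 : ℂ)⁻¹ • (D.flip 1 + I • D.flip I)) z :=
    (((hv 1).fun_add ((hv I).const_mul I)).const_mul (2 : ℂ)⁻¹).congr_of_eventuallyEq
      (.of_forall fun w => by simp only [wdbar]; ring)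
  have hsymm : D 1 I = D I 1 := hg.isSymmSndFDerivAt (by simp) 1 I
  simp only [wd, wdbar, hwd.fderiv, hwdbar.fderiv, _root_.smul_apply, _root_.sub_apply,
    _root_.add_apply, ContinuousLinearMap.flip_apply, smul_eq_mul, hsymm]
  ring

end Scalar

section Vector

variable {N : ℕ} {u v : ℂ → Fin N → ℂ} {a : ℂ → ℂ} {z : ℂ}

theorem DifferentiableAt.star_dotProduct (hu : DifferentiableAt ℝ u z)
    (hv : DifferentiableAt ℝ v z) : DifferentiableAt ℝ (fun w => star (u w) ⬝ᵥ v w) z := by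
  simp only [dotProduct, Pi.star_apply]
  exact .fun_sum fun i _ =>
    ((differentiableAt_pi.1 hu i).star).mul (differentiableAt_pi.1 hv i)

theorem wdv_smul (ha : DifferentiableAt ℝ a z) (hv : DifferentiableAt ℝ v z) :
    wdv (fun w => a w • v w) z = wd a z • v z + a z • wdv v z := by
  funext i
  exact wd_mul ha (differentiableAt_pi.1 hv i)

theorem wdbarv_smul (ha : DifferentiableAt ℝ a z) (hv : DifferentiableAt ℝ v z) :
    wdbarv (fun w => a w • v w) z = wdbar a z • v z + a z • wdbarv v z := by
  funext i
  exact wdbar_mul ha (differentiableAt_pi.1 hv i)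

theorem wdbarv_sub (hu : DifferentiableAt ℝ u z) (hv : DifferentiableAt ℝ v z) :
    wdbarv (fun w => u w - v w) z = wdbarv u z - wdbarv v z := by
  funext i
  exact wdbar_sub (differentiableAt_pi.1 hu i) (differentiableAt_pi.1 hv i)

theorem wd_star_dotProduct (hu : DifferentiableAt ℝ u z) (hv : DifferentiableAt ℝ v z) :
    wd (fun w => star (u w) ⬝ᵥ v w) z = star (wdbarv u z) ⬝ᵥ v z + star (u z) ⬝ᵥ wdv v z := by
  simp only [dotProduct, Pi.star_apply, ← Finset.sum_add_distrib]
  rw [wd_sum fun i _ => ((differentiableAt_pi.1 hu i).star).fun_mul (differentiableAt_pi.1 hv i)]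
  refine Finset.sum_congr rfl fun i _ => ?_
  rw [wd_mul (differentiableAt_pi.1 hu i).star (differentiableAt_pi.1 hv i), wd_star]
  rfl

theorem wdbar_star_dotProduct (hu : DifferentiableAt ℝ u z) (hv : DifferentiableAt ℝ v z) :
    wdbar (fun w => star (u w) ⬝ᵥ v w) z =
      star (wdv u z) ⬝ᵥ v z + star (u z) ⬝ᵥ wdbarv v z := by
  simp only [dotProduct, Pi.star_apply, ← Finset.sum_add_distrib]
  rw [wdbar_sum fun i _ => ((differentiableAt_pi.1 hu i).star).fun_mul (differentiableAt_pi.1 hv i)]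
  refine Finset.sum_congr rfl fun i _ => ?_
  rw [wdbar_mul (differentiableAt_pi.1 hu i).star (differentiableAt_pi.1 hv i), wdbar_star]
  rfl

theorem star_dotProduct_wdbarv_of_orthogonal (hu : DifferentiableAt ℝ u z)
    (hv : DifferentiableAt ℝ v z) (huv : ∀ w, star (u w) ⬝ᵥ v w = 0) :
    star (u z) ⬝ᵥ wdbarv v z = -(star (wdv u z) ⬝ᵥ v z) := by
  have h := wdbar_star_dotProduct hu hv
  rw [funext huv, wdbar, fderiv_const_apply, _root_.zero_apply, _root_.zero_apply] at h
  linear_combination -h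

theorem wdbarv_wdv_comm (hv : ContDiffAt ℝ 2 v z) : wdbarv (wdv v) z = wdv (wdbarv v) z := by
  funext i
  exact wdbar_wd_comm (contDiffAt_pi.1 hv i)

theorem wdbarv_eq_zero_of_differentiableAt (hv : DifferentiableAt ℂ v z) : wdbarv v z = 0 := by
  funext i
  exact wdbar_eq_zero_of_differentiableAt (differentiableAt_pi.1 hv i)

end Vector

section Smoothness

variable {N : ℕ} {n m : WithTop ℕ∞}

theorem ContDiff.wd {g : ℂ → ℂ} (hg : ContDiff ℝ n g) (hmn : m + 1 ≤ n) : ContDiff ℝ m (wd g) :=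
  (((hg.fderiv_right hmn).clm_apply contDiff_const).sub
    (contDiff_const.mul ((hg.fderiv_right hmn).clm_apply contDiff_const))).div_const 2

theorem ContDiff.wdv {v : ℂ → Fin N → ℂ} (hv : ContDiff ℝ n v) (hmn : m + 1 ≤ n) :
    ContDiff ℝ m (wdv v) :=
  contDiff_pi.2 fun i => (contDiff_pi.1 hv i).wd hmn

theorem ContDiff.star_dotProduct {u v : ℂ → Fin N → ℂ} (hu : ContDiff ℝ n u)
    (hv : ContDiff ℝ n v) : ContDiff ℝ n (fun w => star (u w) ⬝ᵥ v w) := by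
  simp only [dotProduct, Pi.star_apply]
  exact .sum fun i _ =>
    (Complex.conjCLE.contDiff.comp (contDiff_pi.1 hu i)).mul (contDiff_pi.1 hv i)

end Smoothness

section Orthogonal

variable {ι K : Type*} [Fintype ι] [Field K] [PartialOrder K] [StarRing K] [StarOrderedRing K]
  {u x y : ι → K} {a b : K}

theorem star_dotProduct_self_ne_zero (hu : u ≠ 0) : star u ⬝ᵥ u ≠ 0 :=
  mt dotProduct_star_self_eq_zero.1 hu

theorem eq_smul_of_eq_smul_add_smul (hx : x = a • u + b • y) (hu : u ≠ 0)
    (hyu : star y ⬝ᵥ u = 0) (hyx : star y ⬝ᵥ x = 0) :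
    x = (star u ⬝ᵥ x / (star u ⬝ᵥ u)) • u := by
  have hby : b • y = 0 := by
    rw [hx, dotProduct_add, dotProduct_smul, dotProduct_smul, hyu, smul_zero, zero_add,
      smul_eq_mul, mul_eq_zero, dotProduct_star_self_eq_zero] at hyx
    rcases hyx with rfl | rfl <;> simp
  rw [hby, add_zero] at hx
  rw [hx, dotProduct_smul, smul_eq_mul, mul_div_assoc,
    div_self (star_dotProduct_self_ne_zero hu), mul_one]

end Orthogonal

section Matrix

variable {N : ℕ} {P Q : ℂ → Matrix (Fin N) (Fin N) ℂ} {a : ℂ → ℂ} {u v : ℂ → Fin N → ℂ}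
  {z : ℂ}

theorem wdm_add (hP : ∀ i k, DifferentiableAt ℝ (fun w => P w i k) z)
    (hQ : ∀ i k, DifferentiableAt ℝ (fun w => Q w i k) z) :
    wdm (fun w => P w + Q w) z = wdm P z + wdm Q z := by
  ext i k
  exact wd_add (hP i k) (hQ i k)

theorem wdm_smul_vecMulVec (ha : DifferentiableAt ℝ a z) (hu : DifferentiableAt ℝ u z)
    (hv : DifferentiableAt ℝ v z) :
    wdm (fun w => a w • vecMulVec (u w) (star (v w))) z =
      wd a z • vecMulVec (u z) (star (v z)) +
        a z • (vecMulVec (wdv u z) (star (v z)) + vecMulVec (u z) (star (wdbarv v z))) := by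
  ext i k
  have hui := differentiableAt_pi.1 hu i
  have hvk := (differentiableAt_pi.1 hv k).star
  simp only [wdm, of_apply, Matrix.smul_apply, vecMulVec_apply, Pi.star_apply, smul_eq_mul,
    Matrix.add_apply]
  rw [wd_mul ha (hui.fun_mul hvk), wd_mul hui hvk, wd_star]
  rfl

theorem differentiableAt_proj_apply (hu : DifferentiableAt ℝ u z) (hu0 : u z ≠ 0) (i k : Fin N) :
    DifferentiableAt ℝ (fun w => proj (u w) i k) z := by
  simp only [proj, Matrix.smul_apply, vecMulVec_apply, Pi.star_apply, smul_eq_mul]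
  exact ((hu.star_dotProduct hu).inv (star_dotProduct_self_ne_zero hu0)).fun_mul
    ((differentiableAt_pi.1 hu i).fun_mul (differentiableAt_pi.1 hu k).star)

theorem wdm_proj (hu : DifferentiableAt ℝ u z) (hu0 : u z ≠ 0) :
    wdm (fun w => proj (u w)) z =
      (star (u z) ⬝ᵥ u z)⁻¹ •
          (vecMulVec (wdv u z) (star (u z)) + vecMulVec (u z) (star (wdbarv u z))) -
        ((star (wdbarv u z) ⬝ᵥ u z + star (u z) ⬝ᵥ wdv u z) / (star (u z) ⬝ᵥ u z) ^ 2) •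
          vecMulVec (u z) (star (u z)) := by
  have hn := hu.star_dotProduct hu
  have hn0 := star_dotProduct_self_ne_zero hu0
  refine (wdm_smul_vecMulVec (a := fun w => (star (u w) ⬝ᵥ u w)⁻¹) (hn.inv hn0) hu hu).trans ?_
  rw [wd_inv hn hn0, wd_star_dotProduct hu hu, neg_div, neg_smul]
  abel

end Matrix

section Fseq

variable {N : ℕ} {f : ℂ → Fin N → ℂ} {j : ℕ} {z : ℂ}

noncomputable def FseqCoeff (f : ℂ → Fin N → ℂ) (j : ℕ) (z : ℂ) : ℂ :=
  star (Fseq f j z) ⬝ᵥ wdv (Fseq f j) z / (star (Fseq f j z) ⬝ᵥ Fseq f j z)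

theorem Fseq_succ (f : ℂ → Fin N → ℂ) (j : ℕ) :
    Fseq f (j + 1) = fun z => wdv (Fseq f j) z - FseqCoeff f j z • Fseq f j z :=
  rfl

theorem wdv_Fseq : wdv (Fseq f j) z = Fseq f (j + 1) z + FseqCoeff f j z • Fseq f j z := by
  rw [Fseq_succ, sub_add_cancel]

theorem contDiff_FseqCoeff (hg : ContDiff ℝ ∞ (Fseq f j)) (hg0 : ∀ z, Fseq f j z ≠ 0) :
    ContDiff ℝ ∞ (FseqCoeff f j) := by
  have hn := hg.star_dotProduct hg
  have h : ContDiff ℝ ∞ fun z => (star (Fseq f j z) ⬝ᵥ Fseq f j z)⁻¹ :=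
    hn.inv fun z => star_dotProduct_self_ne_zero (hg0 z)
  exact (hg.star_dotProduct (hg.wdv le_rfl)).mul h

theorem contDiff_Fseq (hf : ContDiff ℝ ∞ f) (hnv : ∀ i < j, ∀ z, Fseq f i z ≠ 0) :
    ContDiff ℝ ∞ (Fseq f j) := by
  induction j with
  | zero => exact hf
  | succ j ih =>
    have hg := ih fun i hi => hnv i (by omega)
    have hdg := hg.wdv (m := ∞) le_rfl
    have hc := contDiff_FseqCoeff hg (hnv j (by omega))
    rw [Fseq_succ]
    exact hdg.sub (hc.smul hg)

theorem star_Fseq_dotProduct_wdbarv {l : ℕ} (hj : DifferentiableAt ℝ (Fseq f j) z)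
    (hl : DifferentiableAt ℝ (Fseq f l) z) (horth : ∀ w, star (Fseq f j w) ⬝ᵥ Fseq f l w = 0) :
    star (Fseq f j z) ⬝ᵥ wdbarv (Fseq f l) z = -(star (Fseq f (j + 1) z) ⬝ᵥ Fseq f l z) := by
  rw [star_dotProduct_wdbarv_of_orthogonal hj hl horth, wdv_Fseq, star_add, star_smul,
    add_dotProduct, smul_dotProduct, horth, smul_zero, add_zero]

theorem wdbarv_Fseq_succ (hg : ContDiff ℝ ∞ (Fseq f j)) (hg0 : ∀ z, Fseq f j z ≠ 0) :
    wdbarv (Fseq f (j + 1)) z = wdv (wdbarv (Fseq f j)) z -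
      wdbar (FseqCoeff f j) z • Fseq f j z - FseqCoeff f j z • wdbarv (Fseq f j) z := by
  have hdg := hg.wdv (m := ∞) le_rfl
  have hc := contDiff_FseqCoeff hg hg0
  rw [Fseq_succ, wdbarv_sub (v := fun w => FseqCoeff f j w • Fseq f j w)
    (hdg.differentiable (by simp) z)
    ((hc.smul hg).differentiable (by simp) z),
    wdbarv_smul (hc.differentiable (by simp) z) (hg.differentiable (by simp) z),
    wdbarv_wdv_comm (hg.contDiffAt.of_le (WithTop.coe_le_coe.2 le_top))]
  abel

theorem wdbarv_Fseq_one (hf : Differentiable ℂ f) (hf0 : ∀ z, Fseq f 0 z ≠ 0)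
    (horth : ∀ z, star (Fseq f 0 z) ⬝ᵥ Fseq f 1 z = 0) (z : ℂ) :
    wdbarv (Fseq f 1) z =
      -(star (Fseq f 1 z) ⬝ᵥ Fseq f 1 z / (star (Fseq f 0 z) ⬝ᵥ Fseq f 0 z)) • Fseq f 0 z := by
  have hg : ContDiff ℝ ∞ (Fseq f 0) := hf.contDiff.restrict_scalars ℝ
  have hg1 : ContDiff ℝ ∞ (Fseq f 1) := contDiff_Fseq hg fun i hi => by
    rw [Nat.lt_one_iff.1 hi]; exact hf0
  have h0 : wdbarv (Fseq f 0) = 0 := funext fun w => wdbarv_eq_zero_of_differentiableAt (hf w)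
  -- the zero summand lets `eq_smul_of_eq_smul_add_smul` be used with `y = 0`
  have hw : wdbarv (Fseq f 1) z =
      (-wdbar (FseqCoeff f 0) z) • Fseq f 0 z + (0 : ℂ) • (0 : Fin N → ℂ) := by
    have h0' : wdv (0 : ℂ → Fin N → ℂ) z = 0 := funext fun i => by simp [wdv, wd]
    rw [wdbarv_Fseq_succ hg hf0, h0, h0']
    simp
  rw [eq_smul_of_eq_smul_add_smul hw (hf0 z) (by simp) (by simp),
    star_Fseq_dotProduct_wdbarv (hg.differentiable (by simp) z) (hg1.differentiable (by simp) z)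
      horth, neg_div]

theorem wdbarv_Fseq_succ_succ (hf : ContDiff ℝ ∞ f) (hnv : ∀ i ≤ j + 1, ∀ z, Fseq f i z ≠ 0)
    (h01 : ∀ z, star (Fseq f j z) ⬝ᵥ Fseq f (j + 1) z = 0)
    (h02 : ∀ z, star (Fseq f j z) ⬝ᵥ Fseq f (j + 2) z = 0)
    (h12 : ∀ z, star (Fseq f (j + 1) z) ⬝ᵥ Fseq f (j + 2) z = 0)
    (ih : ∀ z, wdbarv (Fseq f (j + 1)) z =
      -(star (Fseq f (j + 1) z) ⬝ᵥ Fseq f (j + 1) z / (star (Fseq f j z) ⬝ᵥ Fseq f j z)) •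
        Fseq f j z) (z : ℂ) :
    wdbarv (Fseq f (j + 2)) z =
      -(star (Fseq f (j + 2) z) ⬝ᵥ Fseq f (j + 2) z /
        (star (Fseq f (j + 1) z) ⬝ᵥ Fseq f (j + 1) z)) • Fseq f (j + 1) z := by
  have hg := contDiff_Fseq hf (j := j) fun i hi => hnv i (by omega)
  have hg1 := contDiff_Fseq hf (j := j + 1) fun i hi => hnv i (by omega)
  have hg2 := contDiff_Fseq hf (j := j + 2) fun i hi => hnv i (by omega)
  set r : ℂ → ℂ := fun w =>
    -(star (Fseq f (j + 1) w) ⬝ᵥ Fseq f (j + 1) w / (star (Fseq f j w) ⬝ᵥ Fseq f j w))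
  have hr : DifferentiableAt ℝ r z := by
    simp only [r, div_eq_mul_inv]
    exact (((hg1.star_dotProduct hg1).differentiable (by simp) z).mul
      (((hg.star_dotProduct hg).differentiable (by simp) z).inv
        (star_dotProduct_self_ne_zero (hnv j (by omega) z)))).neg
  have hw : wdbarv (Fseq f (j + 2)) z =
      (r z - wdbar (FseqCoeff f (j + 1)) z) • Fseq f (j + 1) z +
        (wd r z + r z * FseqCoeff f j z - FseqCoeff f (j + 1) z * r z) • Fseq f j z := by
    have ih' : wdbarv (Fseq f (j + 1)) = fun w => r w • Fseq f j w := funext ih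
    rw [wdbarv_Fseq_succ hg1 (hnv (j + 1) le_rfl), ih', wdv_smul hr (hg.differentiable (by simp) z),
      wdv_Fseq]
    module
  have hjw : star (Fseq f j z) ⬝ᵥ wdbarv (Fseq f (j + 2)) z = 0 := by
    rw [star_Fseq_dotProduct_wdbarv (hg.differentiable (by simp) z)
      (hg2.differentiable (by simp) z) h02, h12, neg_zero]
  rw [eq_smul_of_eq_smul_add_smul hw (hnv (j + 1) le_rfl z) (h01 z) hjw,
    star_Fseq_dotProduct_wdbarv (hg1.differentiable (by simp) z) (hg2.differentiable (by simp) z)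
      h12, neg_div]

theorem wdbarv_Fseq_succ_eq (hf : Differentiable ℂ f) (hnv : ∀ i ≤ j, ∀ z, Fseq f i z ≠ 0)
    (horth : ∀ i l, i ≤ j + 1 → l ≤ j + 1 → i ≠ l → ∀ z, star (Fseq f i z) ⬝ᵥ Fseq f l z = 0)
    (z : ℂ) :
    wdbarv (Fseq f (j + 1)) z =
      -(star (Fseq f (j + 1) z) ⬝ᵥ Fseq f (j + 1) z / (star (Fseq f j z) ⬝ᵥ Fseq f j z)) •
        Fseq f j z := by
  induction j generalizing z with
  | zero => exact wdbarv_Fseq_one hf (hnv 0 le_rfl) (horth 0 1 (by omega) (by omega) (by omega)) z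
  | succ j ih =>
    exact wdbarv_Fseq_succ_succ (hf.contDiff.restrict_scalars ℝ) hnv
      (horth j (j + 1) (by omega) (by omega) (by omega))
      (horth j (j + 2) (by omega) (by omega) (by omega))
      (horth (j + 1) (j + 2) (by omega) (by omega) (by omega))
      (ih (fun i hi => hnv i (by omega)) fun i l hi hl => horth i l (by omega) (by omega)) z

theorem wdm_proj_Fseq_succ (hf : Differentiable ℂ f) (hnv : ∀ i ≤ j + 1, ∀ z, Fseq f i z ≠ 0)
    (horth : ∀ i l, i ≤ j + 2 → l ≤ j + 2 → i ≠ l → ∀ z, star (Fseq f i z) ⬝ᵥ Fseq f l z = 0)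
    (z : ℂ) :
    wdm (fun w => proj (Fseq f (j + 1) w)) z =
      (star (Fseq f (j + 1) z) ⬝ᵥ Fseq f (j + 1) z)⁻¹ •
          vecMulVec (Fseq f (j + 2) z) (star (Fseq f (j + 1) z)) -
        (star (Fseq f j z) ⬝ᵥ Fseq f j z)⁻¹ •
          vecMulVec (Fseq f (j + 1) z) (star (Fseq f j z)) := by
  have hg := contDiff_Fseq (hf.contDiff.restrict_scalars ℝ) (j := j + 1)
    fun i hi => hnv i (by omega)
  have hdbar := wdbarv_Fseq_succ_eq (j := j) hf (fun i hi => hnv i (by omega))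
    (fun i l hi hl => horth i l (by omega) (by omega)) z
  have hdn : star (wdbarv (Fseq f (j + 1)) z) ⬝ᵥ Fseq f (j + 1) z +
      star (Fseq f (j + 1) z) ⬝ᵥ wdv (Fseq f (j + 1)) z =
        FseqCoeff f (j + 1) z * (star (Fseq f (j + 1) z) ⬝ᵥ Fseq f (j + 1) z) := by
    rw [hdbar, wdv_Fseq, star_smul, smul_dotProduct, dotProduct_add, dotProduct_smul,
      horth j (j + 1) (by omega) (by omega) (by omega) z,
      horth (j + 1) (j + 2) (by omega) (by omega) (by omega) z, smul_zero, zero_add, zero_add,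
      smul_eq_mul]
  rw [wdm_proj (hg.differentiable (by simp) z) (hnv (j + 1) le_rfl z), hdn, wdv_Fseq, hdbar]
  have hn1 := star_dotProduct_self_ne_zero (hnv (j + 1) le_rfl z)
  have hr : star (star (Fseq f (j + 1) z) ⬝ᵥ Fseq f (j + 1) z / (star (Fseq f j z) ⬝ᵥ Fseq f j z)) =
      star (Fseq f (j + 1) z) ⬝ᵥ Fseq f (j + 1) z / (star (Fseq f j z) ⬝ᵥ Fseq f j z) := by
    rw [star_div₀, ← star_dotProduct, ← star_dotProduct]
  ext i k
  simp only [Matrix.sub_apply, Matrix.add_apply, Matrix.smul_apply, vecMulVec_apply, Pi.add_apply,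
    Pi.smul_apply, Pi.star_apply, star_smul, star_neg, hr, smul_eq_mul]
  field_simp
  ring

end Fseq

/-- inductive step, with k = m + 2: if
∂(∑_{j=0}^{k−2} Pⱼ) = (f_{k−1} ⊗ f_{k−2}†)/|f_{k−2}|², then
∂(∑_{j=0}^{k−1} Pⱼ) = (f_k ⊗ f_{k−1}†)/|f_{k−1}|², where fⱼ = P₊ʲ f and
Pⱼ = (fⱼ ⊗ fⱼ†)/|fⱼ|². -/
theorem stmt_13 {N : ℕ} (m : ℕ) (f : ℂ → Fin N → ℂ)
    (hhol : ∀ i, Differentiable ℂ (fun z => f z i))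
    (hnv : ∀ j, j ≤ m + 2 → ∀ z, Fseq f j z ≠ 0)
    (horth : ∀ i j, i ≤ m + 2 → j ≤ m + 2 → i ≠ j →
      ∀ z, star (Fseq f i z) ⬝ᵥ Fseq f j z = 0)
    (ξ : ℂ)
    (ih : wdm (fun z => ∑ j ∈ Finset.range (m + 1), proj (Fseq f j z)) ξ =
      (star (Fseq f m ξ) ⬝ᵥ Fseq f m ξ)⁻¹ •
        Matrix.vecMulVec (Fseq f (m + 1) ξ) (star (Fseq f m ξ))) :
    wdm (fun z => ∑ j ∈ Finset.range (m + 2), proj (Fseq f j z)) ξ =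
      (star (Fseq f (m + 1) ξ) ⬝ᵥ Fseq f (m + 1) ξ)⁻¹ •
        Matrix.vecMulVec (Fseq f (m + 2) ξ) (star (Fseq f (m + 1) ξ)) := by
  have hf : Differentiable ℂ f := differentiable_pi.2 hhol
  have hproj : ∀ j ≤ m + 1, ∀ i k, DifferentiableAt ℝ (fun z => proj (Fseq f j z) i k) ξ :=
    fun j hj => differentiableAt_proj_apply
      ((contDiff_Fseq (hf.contDiff.restrict_scalars ℝ) fun i hi => hnv i (by omega)).differentiable
        (by simp) ξ) (hnv j (by omega) ξ)
  have hsum : ∀ i k, DifferentiableAt ℝ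
      (fun z => (∑ j ∈ Finset.range (m + 1), proj (Fseq f j z)) i k) ξ := fun i k => by
    simp only [Matrix.sum_apply]
    exact .fun_sum fun j hj => hproj j (by rw [Finset.mem_range] at hj; omega) i k
  simp_rw [Finset.sum_range_succ _ (m + 1)]
  rw [wdm_add hsum (hproj (m + 1) le_rfl), ih,
    wdm_proj_Fseq_succ hf (fun i hi => hnv i (by omega)) horth ξ, add_sub_cancel]
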